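/- arXiv:1002.4130 — 2 statements merged into one kernel-verified Lean document; each statement's English description precedes it below -/
import Mathlib

section
/- Let H be an atomic monoid. Then every atom of the monoid of relations M_H is either of the form (uH^×, uH^×) for an atom u of H, or is a pair (x, y) ∈ M_H with gcd(x, y) = 1 in Z(H). -/
open Multiset
open scoped Classical ENNReal

/-- The set of atoms (irreducible elements) of a reduced monoid `M`. -/
abbrev Atom (M : Type) [CancelCommMonoid M] : Type := {u : M // Irreducible u}

/-- The factorization homomorphism `π : Z(H) → H`, where the factorization monoid
`Z(H)` is realized as the free commutative monoid (multiset) over the atoms. -/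
def fprod {M : Type} [CancelCommMonoid M] (z : Multiset (Atom M)) : M :=
  (z.map Subtype.val).prod

/-- The set of factorizations `Z(a)` of `a`. -/
def Zf {M : Type} [CancelCommMonoid M] (a : M) : Set (Multiset (Atom M)) :=
  {z | fprod z = a}

/-- `M` is reduced: the only unit is `1`. -/
def Reduced (M : Type) [CancelCommMonoid M] : Prop := ∀ u : M, IsUnit u → u = 1

/-- `M` is atomic: every non-unit is a product of atoms. -/
def Atomic (M : Type) [CancelCommMonoid M] : Prop :=
  ∀ a : M, ¬ IsUnit a → ∃ z : Multiset (Atom M), fprod z = a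

/-- The distance between two factorizations. -/
noncomputable def fdist {M : Type} [CancelCommMonoid M] (z z' : Multiset (Atom M)) : ℕ :=
  max (card (z - z')) (card (z' - z))

/-- The catenary degree `c(a)`: the least `N` such that any two factorizations of `a`
can be concatenated by an `N`-chain of factorizations of `a`. -/
noncomputable def cat {M : Type} [CancelCommMonoid M] (a : M) : ℕ∞ :=
  sInf {N : ℕ∞ | ∀ z ∈ Zf a, ∀ z' ∈ Zf a,
    Relation.ReflTransGen (fun u v => v ∈ Zf a ∧ (fdist u v : ℕ∞) ≤ N) z z'}

/-- The catenary degree `c(H)`. -/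
noncomputable def catH (M : Type) [CancelCommMonoid M] : ℕ∞ := ⨆ a : M, cat a

/-- The `R`-relation on factorizations of `a`: two factorizations are `R`-related if
they can be joined by a chain of factorizations of `a` whose consecutive members have a
common atom (the degenerate case `z = z' = 1` is the reflexivity case). -/
def RRel {M : Type} [CancelCommMonoid M] (a : M) :
    Multiset (Atom M) → Multiset (Atom M) → Prop :=
  Relation.ReflTransGen (fun u v => u ∈ Zf a ∧ v ∈ Zf a ∧ u ∩ v ≠ 0)

/-- `|R_a| ≥ 2`: `a` has at least two `R`-equivalence classes of factorizations. -/
def TwoClasses {M : Type} [CancelCommMonoid M] (a : M) : Prop :=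
  ∃ z ∈ Zf a, ∃ z' ∈ Zf a, ¬ RRel a z z'

/-- `μ(a)`: the supremum over the `R`-classes `ρ` of `Z(a)` of `min {|z| : z ∈ ρ}`. -/
noncomputable def mu {M : Type} [CancelCommMonoid M] (a : M) : ℕ∞ :=
  ⨆ z ∈ Zf a, ⨅ w ∈ {w | w ∈ Zf a ∧ RRel a z w}, (card w : ℕ∞)

/-- `μ(H) = sup {μ(a) : a ∈ H, |R_a| ≥ 2}`. -/
noncomputable def muH (M : Type) [CancelCommMonoid M] : ℕ∞ :=
  ⨆ a : M, ⨆ (_ : TwoClasses a), mu a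

/-- The monoid of relations `M_H ⊆ Z(H) × Z(H)`. -/
def MHset (M : Type) [CancelCommMonoid M] :
    Set (Multiset (Atom M) × Multiset (Atom M)) :=
  {p | fprod p.1 = fprod p.2}

/-- Atoms of the (reduced) monoid of relations `M_H`. -/
def IsRelAtom {M : Type} [CancelCommMonoid M]
    (p : Multiset (Atom M) × Multiset (Atom M)) : Prop :=
  p ∈ MHset M ∧ p ≠ 0 ∧
    ∀ q r, q ∈ MHset M → r ∈ MHset M → p = q + r → q = 0 ∨ r = 0

/-!
If the two sides of an atom `p` of `M_H` share an atom `u` of `H`, then `p` splits in `M_H`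
as `(u, u) + (x, y)`, where `(x, y) ∈ M_H` because `H` is cancellative. Since `(u, u) ≠ 0`,
atomicity of `p` forces `(x, y) = 0`.
-/

section

variable {M : Type} [CancelCommMonoid M]

theorem fprod_cons (u : Atom M) (z : Multiset (Atom M)) :
    fprod (u ::ₘ z) = u.val * fprod z := by
  simp only [fprod, Multiset.map_cons, Multiset.prod_cons]

theorem diag_singleton_mem_MHset (u : Atom M) : (({u}, {u}) : _ × _) ∈ MHset M := rfl

theorem mem_MHset_of_cons_mem {u : Atom M} {x y : Multiset (Atom M)}
    (h : (u ::ₘ x, u ::ₘ y) ∈ MHset M) : (x, y) ∈ MHset M := by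
  change fprod (u ::ₘ x) = fprod (u ::ₘ y) at h
  rw [fprod_cons, fprod_cons] at h
  exact mul_left_cancel h

theorem IsRelAtom.eq_diag_singleton_of_mem_inter {p : Multiset (Atom M) × Multiset (Atom M)}
    (hp : IsRelAtom p) {u : Atom M} (hu : u ∈ p.1 ∩ p.2) : p = ({u}, {u}) := by
  obtain ⟨hu₁, hu₂⟩ := Multiset.mem_inter.mp hu
  obtain ⟨x, hx⟩ := Multiset.exists_cons_of_mem hu₁
  obtain ⟨y, hy⟩ := Multiset.exists_cons_of_mem hu₂
  have hp_eq : p = (u ::ₘ x, u ::ₘ y) := Prod.ext hx hy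
  have hxy : (x, y) ∈ MHset M := mem_MHset_of_cons_mem (hp_eq ▸ hp.1)
  have hsplit : p = ({u}, {u}) + (x, y) := by
    rw [hp_eq, Prod.mk_add_mk, Multiset.singleton_add, Multiset.singleton_add]
  rcases hp.2.2 _ _ (diag_singleton_mem_MHset u) hxy hsplit with hdiag | hrest
  · exact absurd (congrArg Prod.fst hdiag) (Multiset.singleton_ne_zero u)
  · rw [hsplit, hrest, add_zero]

end

theorem relAtom_structure_general (M : Type) [CancelCommMonoid M]
    (p : Multiset (Atom M) × Multiset (Atom M)) (hp : IsRelAtom p) :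
    (∃ u : Atom M, p = ({u}, {u})) ∨ p.1 ∩ p.2 = 0 := by
  rcases Multiset.empty_or_exists_mem (p.1 ∩ p.2) with hcoprime | ⟨u, hu⟩
  · exact Or.inr hcoprime
  · exact Or.inl ⟨u, hp.eq_diag_singleton_of_mem_inter hu⟩

/-- **Lemma 4.3.** Every atom of the monoid of relations `M_H` is either of the form
`(u, u)` for an atom `u` of `H`, or is a pair of factorizations which are coprime in the
free monoid `Z(H)`. -/
theorem relAtom_structure (M : Type) [CancelCommMonoid M]
    (hred : Reduced M) (hat : Atomic M)
    (p : Multiset (Atom M) × Multiset (Atom M)) (hp : IsRelAtom p) :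
    (∃ u : Atom M, p = ({u}, {u})) ∨ p.1 ∩ p.2 = 0 :=
  relAtom_structure_general M p hp
end

section
/- Let H be an atomic monoid. Then the catenary degree satisfies c(H) ≤ sup{ |x| : (x, y) ∈ A(M_H) }, the supremum of first-coordinate lengths of atoms of the monoid of relations. -/
open Multiset
open scoped Classical ENNReal

/-! A relation `(x, y)` with `|x|, |y| ≤ N` is a single `N`-step from `x + w` to `y + w`.
Every relation is a sum of relation atoms, so performing these steps one atom at a time
joins any two factorizations `z, z'` of an element by an `N`-chain, with `N` the largest
length occurring in an atom. The atoms of `M_H` are stable under swapping coordinates,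
so this `N` is the supremum of the first-coordinate lengths. -/

variable {M : Type} [CancelCommMonoid M]

lemma fprod_add (x y : Multiset (Atom M)) : fprod (x + y) = fprod x * fprod y := by
  simp [fprod]

lemma fdist_add_right (x y w : Multiset (Atom M)) : fdist (x + w) (y + w) = fdist x y := by
  simp only [fdist, add_tsub_add_eq_tsub_right]

lemma fdist_le_max_card (x y : Multiset (Atom M)) : fdist x y ≤ max (card x) (card y) :=
  max_le_max (card_le_card tsub_le_self) (card_le_card tsub_le_self)

lemma swap_mem_MHset {p : Multiset (Atom M) × Multiset (Atom M)} (hp : p ∈ MHset M) :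
    p.swap ∈ MHset M :=
  Eq.symm hp

lemma IsRelAtom.swap {p : Multiset (Atom M) × Multiset (Atom M)} (hp : IsRelAtom p) :
    IsRelAtom p.swap := by
  obtain ⟨hmem, hne, hirr⟩ := hp
  refine ⟨swap_mem_MHset hmem, fun h => hne (by simpa using congrArg Prod.swap h), ?_⟩
  intro q r hq hr hqr
  have := hirr q.swap r.swap (swap_mem_MHset hq) (swap_mem_MHset hr)
    (by simpa using congrArg Prod.swap hqr)
  simpa [Prod.ext_iff, and_comm] using this

lemma card_add_card_pos {p : Multiset (Atom M) × Multiset (Atom M)} (hp : p ≠ 0) :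
    0 < card p.1 + card p.2 := by
  by_contra! h
  exact hp (Prod.ext (card_eq_zero.mp (by omega)) (card_eq_zero.mp (by omega)))

theorem MHset.induction_on_relAtom {P : Multiset (Atom M) × Multiset (Atom M) → Prop}
    (zero : P 0) (atom : ∀ q, IsRelAtom q → P q)
    (add : ∀ q r, q ∈ MHset M → r ∈ MHset M → P q → P r → P (q + r))
    {p : Multiset (Atom M) × Multiset (Atom M)} (hp : p ∈ MHset M) : P p := by
  induction hn : card p.1 + card p.2 using Nat.strong_induction_on generalizing p with
  | _ n ih =>
    by_cases hp0 : p = 0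
    · exact hp0 ▸ zero
    by_cases hatom : IsRelAtom p
    · exact atom p hatom
    obtain ⟨q, r, hq, hr, rfl, hq0, hr0⟩ :
        ∃ q r, q ∈ MHset M ∧ r ∈ MHset M ∧ p = q + r ∧ q ≠ 0 ∧ r ≠ 0 := by
      by_contra! h
      exact hatom ⟨hp, hp0, fun q r hq hr hqr => or_iff_not_imp_left.mpr (h q r hq hr hqr)⟩
    have hcard : card (q + r).1 + card (q + r).2 =
        (card q.1 + card q.2) + (card r.1 + card r.2) := by
      simp only [Prod.fst_add, Prod.snd_add, card_add]
      ring
    have := card_add_card_pos hq0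
    have := card_add_card_pos hr0
    exact add q r hq hr (ih _ (by omega) hq rfl) (ih _ (by omega) hr rfl)

def NChain (N : ℕ∞) (a : M) : Multiset (Atom M) → Multiset (Atom M) → Prop :=
  Relation.ReflTransGen (fun u v => v ∈ Zf a ∧ (fdist u v : ℕ∞) ≤ N)

def ChainRealizable (N : ℕ∞) (p : Multiset (Atom M) × Multiset (Atom M)) : Prop :=
  ∀ w, NChain N (fprod (p.1 + w)) (p.1 + w) (p.2 + w)

lemma chainRealizable_zero (N : ℕ∞) : ChainRealizable N (0 : Multiset (Atom M) × _) :=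
  fun _ => Relation.ReflTransGen.refl

lemma chainRealizable_of_card_le {N : ℕ∞} {p : Multiset (Atom M) × Multiset (Atom M)}
    (hp : p ∈ MHset M) (h1 : (card p.1 : ℕ∞) ≤ N) (h2 : (card p.2 : ℕ∞) ≤ N) :
    ChainRealizable N p := by
  intro w
  refine Relation.ReflTransGen.single ⟨?_, ?_⟩
  · change fprod (p.2 + w) = fprod (p.1 + w)
    rw [fprod_add, fprod_add, hp]
  · rw [fdist_add_right]
    exact (Nat.cast_le.mpr (fdist_le_max_card p.1 p.2)).trans (max_le h1 h2)

lemma ChainRealizable.add {N : ℕ∞} {p q : Multiset (Atom M) × Multiset (Atom M)}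
    (hp : p ∈ MHset M) (hpN : ChainRealizable N p) (hqN : ChainRealizable N q) :
    ChainRealizable N (p + q) := by
  intro w
  have first := hpN (q.1 + w)
  have second := hqN (p.2 + w)
  have hsame : fprod (q.1 + (p.2 + w)) = fprod (p.1 + (q.1 + w)) := by
    simp only [fprod_add, ← show fprod p.1 = fprod p.2 from hp]
    ac_rfl
  rw [hsame] at second
  simp only [Prod.fst_add, Prod.snd_add, add_assoc] at first second ⊢
  rw [add_left_comm q.1, add_left_comm q.2] at second
  exact first.trans second

theorem cat_le_sup_relAtom_general (M : Type) [CancelCommMonoid M] :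
    catH M ≤ ⨆ p : Multiset (Atom M) × Multiset (Atom M),
      ⨆ (_ : IsRelAtom p), (card p.1 : ℕ∞) := by
  set S : ℕ∞ := ⨆ p : Multiset (Atom M) × Multiset (Atom M),
    ⨆ (_ : IsRelAtom p), (card p.1 : ℕ∞)
  have hfst : ∀ p, IsRelAtom p → (card p.1 : ℕ∞) ≤ S := fun p hp => le_iSup₂_of_le p hp le_rfl
  have hrel : ∀ p ∈ MHset M, ChainRealizable S p :=
    fun p hp => MHset.induction_on_relAtom (chainRealizable_zero S)
      (fun q hq => chainRealizable_of_card_le hq.1 (hfst q hq) (hfst _ hq.swap))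
      (fun q r hq _ hqS hrS => hqS.add hq hrS) hp
  refine iSup_le fun a => sInf_le fun z hz z' hz' => ?_
  have := hrel (z, z') (hz.trans hz'.symm) 0
  rwa [add_zero, add_zero, hz] at this

/-- **Proposition 4.5.1.** `c(H) ≤ sup {|x| : (x, y) ∈ A(M_H)}`. -/
theorem cat_le_sup_relAtom (M : Type) [CancelCommMonoid M]
    (hred : Reduced M) (hat : Atomic M) :
    catH M ≤ ⨆ p : Multiset (Atom M) × Multiset (Atom M),
      ⨆ (_ : IsRelAtom p), (card p.1 : ℕ∞) :=
  cat_le_sup_relAtom_general M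
end
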